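/- arXiv:1506.00143 — 2 statements merged into one kernel-verified Lean document; each statement's English description precedes it below -/
import Mathlib

section
/- Let N, n and d be positive integers, let A be a nontrivial finite group and let B ≤ Sym(n) be a permutation group. If the permutational wreath product G = A^N ≀ B = (A^N)^n ⋊ B can be generated by d elements, then N ≤ |A|^{nd}. -/
open Equiv

/-- The automorphism of `β → G` given by permuting coordinates by `b : Perm β`. -/
def permCoordAut {β : Type} (G : Type*) [Group G] (b : Perm β) : (β → G) ≃* (β → G) where
  toFun x := fun i => x (b⁻¹ i)
  invFun x := fun i => x (b i)
  left_inv x := by funext i; simp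
  right_inv x := by funext i; simp
  map_mul' x y := rfl

/-- The action (by automorphisms) of a permutation group `B ≤ Perm β` on `β → G`,
permuting the coordinates. -/
def permCoordHom {β : Type} (B : Subgroup (Perm β)) (G : Type*) [Group G] :
    B →* MulAut (β → G) where
  toFun b := permCoordAut G (b : Perm β)
  map_one' := by
    apply MulEquiv.ext; intro x; funext i; simp [permCoordAut]
  map_mul' b c := by
    apply MulEquiv.ext; intro x; funext i
    simp [permCoordAut, Perm.mul_apply, mul_inv_rev, MulAut.mul_apply]

/-- The (abstract) permutational wreath product `C ≀ B = C^n ⋊ B` of a group `C` by a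
permutation group `B ≤ Perm β`, with `B` permuting the coordinates of `C^β`. -/
abbrev WreathSD {β : Type} (C : Type*) [Group C] (B : Subgroup (Perm β)) :=
  SemidirectProduct (β → C) B (permCoordHom B C)

/-- The minimal number of generators of a group. -/
noncomputable def minGens (G : Type*) [Group G] : ℕ :=
  sInf {r | ∃ T : Finset G, T.card = r ∧ Subgroup.closure (T : Set G) = ⊤}

/-!
Suppose `T` generates `A^N ≀ B` with `|T| ≤ d` and `N > |A|^(n d)`. Label each of the `N` factors
`l` of `A^N` by the `n |T|` entries at `l` of the base coordinates of the generators; two factors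
`l ≠ l'` get the same label. Because `B` permutes the `n` blocks rigidly, the elements whose every
block has equal entries at `l` and `l'` form a subgroup; it contains `T` but not an element with
a single nontrivial entry at `l`, a contradiction.
-/

theorem Pi.eqLocus_evalMonoidHom_ne_top {ι : Type*} {A : Type*} [Group A] [Nontrivial A]
    [DecidableEq ι] {l l' : ι} (h : l ≠ l') :
    (Pi.evalMonoidHom (fun _ : ι => A) l).eqLocus (Pi.evalMonoidHom _ l') ≠ ⊤ := by
  obtain ⟨a, ha⟩ := exists_ne (1 : A)
  intro htop
  have hmem := htop ▸ Subgroup.mem_top (Pi.mulSingle l a : ι → A)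
  change (Pi.mulSingle l a : ι → A) l = (Pi.mulSingle l a : ι → A) l' at hmem
  simp [h.symm, ha] at hmem

namespace WreathSD

variable {β : Type} {C : Type*} [Group C] {B : Subgroup (Perm β)}

@[simp]
theorem mul_left_apply (g h : WreathSD C B) (j : β) :
    (g * h).left j = g.left j * h.left ((g.right : Perm β)⁻¹ j) :=
  rfl

@[simp]
theorem inv_left_apply (g : WreathSD C B) (j : β) :
    g⁻¹.left j = (g.left ((g.right : Perm β) j))⁻¹ :=
  rfl

variable (B) in
def coordSubgroup (H : Subgroup C) : Subgroup (WreathSD C B) where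
  carrier := {g | ∀ j, g.left j ∈ H}
  mul_mem' hg hh j := by simpa using H.mul_mem (hg j) (hh _)
  one_mem' _ := H.one_mem
  inv_mem' hg j := by simpa using H.inv_mem (hg _)

theorem coordSubgroup_ne_top [Nonempty β] {H : Subgroup C} (hH : H ≠ ⊤) :
    coordSubgroup B H ≠ ⊤ := by
  obtain ⟨c, -, hc⟩ := SetLike.exists_of_lt hH.lt_top
  obtain ⟨j⟩ := ‹Nonempty β›
  intro htop
  exact hc ((htop ▸ Subgroup.mem_top (SemidirectProduct.inl fun _ => c) :) j)

theorem exists_ne_subset_coordSubgroup_eqLocus {ι A : Type} [Group A] [Finite β] [Finite A]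
    (T : Finset (WreathSD (ι → A) B)) (hT : Nat.card A ^ (Nat.card β * T.card) < Nat.card ι) :
    ∃ l l', l ≠ l' ∧ (T : Set (WreathSD (ι → A) B)) ⊆
      coordSubgroup B ((Pi.evalMonoidHom (fun _ : ι => A) l).eqLocus (Pi.evalMonoidHom _ l')) := by
  let label : ι → (T → β → A) := fun l t j => (t : WreathSD (ι → A) B).left j l
  have hcard : Nat.card (T → β → A) < Nat.card ι := by
    simpa [Nat.card_fun, ← pow_mul, mul_comm] using hT
  obtain ⟨l, l', heq, hne⟩ := Function.not_injective_iff.1 fun hinj =>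
    (Nat.card_le_card_of_injective label hinj).not_gt hcard
  exact ⟨l, l', hne, fun t ht j => congrFun (congrFun heq ⟨t, ht⟩) j⟩

end WreathSD

theorem card_bound_general (N n d : ℕ) (hn : 0 < n)
    (A : Type) [Group A] [Finite A] [Nontrivial A]
    (B : Subgroup (Perm (Fin n)))
    (hgen : ∃ T : Finset (WreathSD (Fin N → A) B), T.card ≤ d ∧
      Subgroup.closure (T : Set (WreathSD (Fin N → A) B)) = ⊤) :
    N ≤ Nat.card A ^ (n * d) := by
  obtain ⟨T, hTcard, hTgen⟩ := hgen
  by_contra! hlt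
  have hA : 0 < Nat.card A := Nat.card_pos
  obtain ⟨l, l', hne, hT⟩ := WreathSD.exists_ne_subset_coordSubgroup_eqLocus (B := B) T (by
    simpa using (Nat.pow_le_pow_right hA (Nat.mul_le_mul_left n hTcard)).trans_lt hlt)
  have : Nonempty (Fin n) := ⟨⟨0, hn⟩⟩
  refine WreathSD.coordSubgroup_ne_top (B := B) (Pi.eqLocus_evalMonoidHom_ne_top (A := A) hne) ?_
  exact top_le_iff.1 (hTgen ▸ (Subgroup.closure_le _).2 hT)

/-- **Lemma (key bound in the proof of the lower bound).** If `A^N ≀ B` is `d`-generated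
then `N ≤ |A|^(n d)`. -/
theorem card_bound (N n d : ℕ) (hN : 0 < N) (hn : 0 < n) (hd : 0 < d)
    (A : Type) [Group A] [Finite A] [Nontrivial A]
    (B : Subgroup (Perm (Fin n)))
    (hgen : ∃ T : Finset (WreathSD (Fin N → A) B), T.card ≤ d ∧
      Subgroup.closure (T : Set (WreathSD (Fin N → A) B)) = ⊤) :
    N ≤ Nat.card A ^ (n * d) :=
  card_bound_general N n d hn A B hgen
end

section
/- Let S = {S_k ≤ Sym({1,…,m_k})}_{k∈ℕ} be a sequence of finite permutation groups, let {k_n}_{n∈ℕ} be an increasing sequence of positive integers (with the convention k_0 = 0), and let G_n be the iterated mixed wreath product of type (S,{k_n}). For each n ∈ ℕ define permutation groups Ŝ_{k_n}^{(i)} for i ∈ {k_{n−1}+1,…,k_n} by Ŝ_{k_n}^{(k_n)} = S_{k_n} and Ŝ_{k_n}^{(i)} = Ŝ_{k_n}^{(i+1)} ⟨≀⟩ S_i, and set H_n = Ŝ_{k_n}^{(k_{n−1}+1)}. Then for every n ∈ ℕ the permutation group G_{k_n} is isomorphic as a permutation group to the iterated exponentiation H̃_n of the sequence H_1,…,H_n.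 -/
open Equiv

/-- The product-action permutation of `β → α` induced by `a : β → Perm α` and `b : Perm β`. -/
def prodPerm {α β : Type} (a : β → Perm α) (b : Perm β) : Perm (β → α) where
  toFun x := fun i => a i (x (b⁻¹ i))
  invFun x := fun i => (a (b i))⁻¹ (x (b i))
  left_inv x := by funext i; simp
  right_inv x := by funext i; simp

@[simp] theorem prodPerm_apply {α β : Type} (a : β → Perm α) (b : Perm β) (x : β → α) (i : β) :
    prodPerm a b x i = a i (x (b⁻¹ i)) := rfl

theorem prodPerm_one {α β : Type} :
    prodPerm (fun _ : β => (1 : Perm α)) 1 = 1 := by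
  apply Equiv.ext; intro x; funext i; simp

theorem prodPerm_mul {α β : Type} (a a' : β → Perm α) (b b' : Perm β) :
    prodPerm a b * prodPerm a' b' = prodPerm (fun i => a i * a' (b⁻¹ i)) (b * b') := by
  apply Equiv.ext; intro x; funext i
  simp [Perm.mul_apply, mul_inv_rev]

theorem prodPerm_inv {α β : Type} (a : β → Perm α) (b : Perm β) :
    (prodPerm a b)⁻¹ = prodPerm (fun i => (a (b i))⁻¹) b⁻¹ := by
  apply Equiv.ext; intro x; funext i
  simp [prodPerm, Perm.inv_def]

/-- The exponentiation `A ⟨≀⟩ B` of permutation groups, as a subgroup of `Perm (β → α)`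
acting by the product action. -/
def expWr {α β : Type} (A : Subgroup (Perm α)) (B : Subgroup (Perm β)) :
    Subgroup (Perm (β → α)) where
  carrier := {π | ∃ (a : β → Perm α) (b : Perm β),
    (∀ i, a i ∈ A) ∧ b ∈ B ∧ π = prodPerm a b}
  one_mem' := ⟨fun _ => 1, 1, fun _ => A.one_mem, B.one_mem, prodPerm_one.symm⟩
  mul_mem' := by
    rintro π π' ⟨a, b, ha, hb, rfl⟩ ⟨a', b', ha', hb', rfl⟩
    exact ⟨fun i => a i * a' (b⁻¹ i), b * b',
      fun i => A.mul_mem (ha i) (ha' _), B.mul_mem hb hb', prodPerm_mul a a' b b'⟩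
  inv_mem' := by
    rintro π ⟨a, b, ha, hb, rfl⟩
    exact ⟨fun i => (a (b i))⁻¹, b⁻¹,
      fun i => A.inv_mem (ha _), B.inv_mem hb, prodPerm_inv a b⟩

/-- A bundled permutation group: a set together with a subgroup of its permutation group. -/
structure PermGroup where
  carrier : Type
  grp : Subgroup (Perm carrier)

/-- Exponentiation of bundled permutation groups. -/
def ExpP (A B : PermGroup) : PermGroup :=
  ⟨B.carrier → A.carrier, expWr A.grp B.grp⟩

/-- Iterated exponentiation of a sequence of permutation groups:
`S̃ 0 = S 0` and `S̃ (k+1) = S (k+1) ⟨≀⟩ S̃ k`. -/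
def iterExpP (S : ℕ → PermGroup) : ℕ → PermGroup
  | 0 => S 0
  | k + 1 => ExpP (S (k + 1)) (iterExpP S k)

/-- `π'` in `A ⟨≀⟩ P` projects to `π` in `P`. -/
def IsLift {A P : PermGroup} (π' : (ExpP A P).grp) (π : P.grp) : Prop :=
  ∃ a : P.carrier → Perm A.carrier, (∀ i, a i ∈ A.grp) ∧
    (π' : Perm (ExpP A P).carrier) = prodPerm a (π : Perm P.carrier)

theorem IsLift.one {A P : PermGroup} : IsLift (A := A) (P := P) 1 1 :=
  ⟨fun _ => 1, fun _ => A.grp.one_mem, by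
    simp only [OneMemClass.coe_one]
    exact prodPerm_one.symm⟩

theorem IsLift.mul {A P : PermGroup} {π₁ π₂ : (ExpP A P).grp} {ρ₁ ρ₂ : P.grp}
    (h₁ : IsLift π₁ ρ₁) (h₂ : IsLift π₂ ρ₂) : IsLift (π₁ * π₂) (ρ₁ * ρ₂) := by
  obtain ⟨a, ha, hEq⟩ := h₁
  obtain ⟨a', ha', hEq'⟩ := h₂
  exact ⟨fun i => a i * a' ((ρ₁ : Perm P.carrier)⁻¹ i),
    fun i => A.grp.mul_mem (ha i) (ha' _), by
      push_cast [hEq, hEq']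
      exact prodPerm_mul a a' _ _⟩

theorem IsLift.inv {A P : PermGroup} {π₁ : (ExpP A P).grp} {ρ₁ : P.grp}
    (h₁ : IsLift π₁ ρ₁) : IsLift π₁⁻¹ ρ₁⁻¹ := by
  obtain ⟨a, ha, hEq⟩ := h₁
  exact ⟨fun i => (a ((ρ₁ : Perm P.carrier) i))⁻¹,
    fun i => A.grp.inv_mem (ha _), by
      push_cast [hEq]
      exact prodPerm_inv a _⟩

/-- The inverse limit of the iterated exponentiations, realised as the subgroup of
compatible sequences in the product of all the finite levels. -/
def iterLimit (S : ℕ → PermGroup) : Subgroup (∀ k, (iterExpP S k).grp) where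
  carrier := {f | ∀ k, IsLift (A := S (k + 1)) (P := iterExpP S k) (f (k + 1)) (f k)}
  one_mem' := fun _ => IsLift.one
  mul_mem' := fun hf hg k => IsLift.mul (hf k) (hg k)
  inv_mem' := fun hf k => IsLift.inv (hf k)

/-- Each finite level carries the discrete topology; the limit then carries the subspace
topology of the product topology, i.e. the usual profinite topology. -/
instance (S : ℕ → PermGroup) (k : ℕ) : TopologicalSpace ((iterExpP S k).grp) := ⊥

/-- The imprimitive (permutational wreath) permutation of `α × β` induced by
`a : β → Perm α` and `b : Perm β`. -/
def wrPerm {α β : Type} (a : β → Perm α) (b : Perm β) : Perm (α × β) where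
  toFun p := (a (b p.2) p.1, b p.2)
  invFun p := ((a p.2)⁻¹ p.1, b⁻¹ p.2)
  left_inv p := by simp
  right_inv p := by simp

theorem wrPerm_one {α β : Type} :
    wrPerm (fun _ : β => (1 : Perm α)) 1 = 1 := by
  apply Equiv.ext; intro p; simp [wrPerm]

theorem wrPerm_mul {α β : Type} (a a' : β → Perm α) (b b' : Perm β) :
    wrPerm a b * wrPerm a' b' = wrPerm (fun j => a j * a' (b⁻¹ j)) (b * b') := by
  apply Equiv.ext; intro p
  simp [wrPerm, Perm.mul_apply]

theorem wrPerm_inv {α β : Type} (a : β → Perm α) (b : Perm β) :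
    (wrPerm a b)⁻¹ = wrPerm (fun j => (a (b j))⁻¹) b⁻¹ := by
  apply Equiv.ext; intro p
  simp [wrPerm, Perm.inv_def]

/-- The permutational wreath product `A ≀ B` of permutation groups, as a subgroup of
`Perm (α × β)` acting by the imprimitive action. -/
def permWr {α β : Type} (A : Subgroup (Perm α)) (B : Subgroup (Perm β)) :
    Subgroup (Perm (α × β)) where
  carrier := {π | ∃ (a : β → Perm α) (b : Perm β),
    (∀ i, a i ∈ A) ∧ b ∈ B ∧ π = wrPerm a b}
  one_mem' := ⟨fun _ => 1, 1, fun _ => A.one_mem, B.one_mem, wrPerm_one.symm⟩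
  mul_mem' := by
    rintro π π' ⟨a, b, ha, hb, rfl⟩ ⟨a', b', ha', hb', rfl⟩
    exact ⟨fun j => a j * a' (b⁻¹ j), b * b',
      fun j => A.mul_mem (ha j) (ha' _), B.mul_mem hb hb', wrPerm_mul a a' b b'⟩
  inv_mem' := by
    rintro π ⟨a, b, ha, hb, rfl⟩
    exact ⟨fun j => (a (b j))⁻¹, b⁻¹,
      fun j => A.inv_mem (ha _), B.inv_mem hb, wrPerm_inv a b⟩

/-- Permutational wreath product of bundled permutation groups. -/
def WrP (A B : PermGroup) : PermGroup :=
  ⟨A.carrier × B.carrier, permWr A.grp B.grp⟩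

/-- The iterated mixed wreath product determined by a sequence of permutation groups `S`
and a function `e : ℕ → Bool` recording at which levels the exponentiation (product
action) is used instead of the permutational wreath product. -/
def mixedPG (S : ℕ → PermGroup) (e : ℕ → Bool) : ℕ → PermGroup
  | 0 => S 0
  | k + 1 => cond (e (k + 1)) (ExpP (S (k + 1)) (mixedPG S e k))
      (WrP (S (k + 1)) (mixedPG S e k))

/-- `π'` in `A ≀ P` projects to `π` in `P`. -/
def IsLiftWr {A P : PermGroup} (π' : (WrP A P).grp) (π : P.grp) : Prop :=
  ∃ a : P.carrier → Perm A.carrier, (∀ i, a i ∈ A.grp) ∧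
    (π' : Perm (WrP A P).carrier) = wrPerm a (π : Perm P.carrier)

theorem IsLiftWr.one {A P : PermGroup} : IsLiftWr (A := A) (P := P) 1 1 :=
  ⟨fun _ => 1, fun _ => A.grp.one_mem, by
    simp only [OneMemClass.coe_one]
    exact wrPerm_one.symm⟩

theorem IsLiftWr.mul {A P : PermGroup} {π₁ π₂ : (WrP A P).grp} {ρ₁ ρ₂ : P.grp}
    (h₁ : IsLiftWr π₁ ρ₁) (h₂ : IsLiftWr π₂ ρ₂) : IsLiftWr (π₁ * π₂) (ρ₁ * ρ₂) := by
  obtain ⟨a, ha, hEq⟩ := h₁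
  obtain ⟨a', ha', hEq'⟩ := h₂
  exact ⟨fun j => a j * a' ((ρ₁ : Perm P.carrier)⁻¹ j),
    fun j => A.grp.mul_mem (ha j) (ha' _), by
      push_cast [hEq, hEq']
      exact wrPerm_mul a a' _ _⟩

theorem IsLiftWr.inv {A P : PermGroup} {π₁ : (WrP A P).grp} {ρ₁ : P.grp}
    (h₁ : IsLiftWr π₁ ρ₁) : IsLiftWr π₁⁻¹ ρ₁⁻¹ := by
  obtain ⟨a, ha, hEq⟩ := h₁
  exact ⟨fun j => (a ((ρ₁ : Perm P.carrier) j))⁻¹,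
    fun j => A.grp.inv_mem (ha _), by
      push_cast [hEq]
      exact wrPerm_inv a _⟩

/-- The projection relation for a mixed step: exponentiation if `b = true`, permutational
wreath product if `b = false`. -/
def IsLiftMixed (A P : PermGroup) (b : Bool) :
    ((cond b (ExpP A P) (WrP A P)).grp) → (P.grp) → Prop :=
  match b with
  | true => fun π' π => IsLift π' π
  | false => fun π' π => IsLiftWr π' π

theorem IsLiftMixed.one {A P : PermGroup} (b : Bool) : IsLiftMixed A P b 1 1 := by
  cases b
  · exact IsLiftWr.one
  · exact IsLift.one

theorem IsLiftMixed.mul {A P : PermGroup} (b : Bool)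
    {π₁ π₂ : ((cond b (ExpP A P) (WrP A P)).grp)} {ρ₁ ρ₂ : P.grp}
    (h₁ : IsLiftMixed A P b π₁ ρ₁) (h₂ : IsLiftMixed A P b π₂ ρ₂) :
    IsLiftMixed A P b (π₁ * π₂) (ρ₁ * ρ₂) := by
  cases b
  · exact IsLiftWr.mul h₁ h₂
  · exact IsLift.mul h₁ h₂

theorem IsLiftMixed.inv {A P : PermGroup} (b : Bool)
    {π₁ : ((cond b (ExpP A P) (WrP A P)).grp)} {ρ₁ : P.grp}
    (h₁ : IsLiftMixed A P b π₁ ρ₁) : IsLiftMixed A P b π₁⁻¹ ρ₁⁻¹ := by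
  cases b
  · exact IsLiftWr.inv h₁
  · exact IsLift.inv h₁

/-- The inverse limit of an iterated mixed wreath product, realised as the subgroup of
compatible sequences in the product of all the finite levels. -/
def mixedLimit (S : ℕ → PermGroup) (e : ℕ → Bool) :
    Subgroup (∀ k, (mixedPG S e k).grp) where
  carrier := {f | ∀ k,
    IsLiftMixed (S (k + 1)) (mixedPG S e k) (e (k + 1)) (f (k + 1)) (f k)}
  one_mem' := fun k => IsLiftMixed.one _
  mul_mem' := fun hf hg k => IsLiftMixed.mul _ (hf k) (hg k)
  inv_mem' := fun hf k => IsLiftMixed.inv _ (hf k)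

/-- Each finite level carries the discrete topology; the limit then carries the subspace
topology of the product topology, i.e. the usual profinite topology. -/
instance (S : ℕ → PermGroup) (e : ℕ → Bool) (k : ℕ) :
    TopologicalSpace ((mixedPG S e k).grp) := ⊥
/-- The groups `Ŝ_{k_n}^{(i)}`: `hatFrom S b c` is the iterated exponentiation
`(…(S b ⟨≀⟩ S (b-1)) ⟨≀⟩ … ) ⟨≀⟩ S (b-c)` built descending from index `b`. -/
def hatFrom (S : ℕ → PermGroup) (b : ℕ) : ℕ → PermGroup
  | 0 => S b
  | c + 1 => ExpP (hatFrom S b c) (S (b - (c + 1)))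

/-- The sequence `H_n = Ŝ_{k_n}^{(k_{n-1}+1)}` (with the convention `k_0 = 0`); here the
sequence `S` and the increasing sequence `kseq` are both indexed from `0`, so `S t`
is the paper's `S_{t+1}` and `kseq t` is the paper's `k_{t+1}`. -/
def hatSeq (S : ℕ → PermGroup) (kseq : ℕ → ℕ) : ℕ → PermGroup
  | 0 => hatFrom S (kseq 0 - 1) (kseq 0 - 1)
  | t + 1 => hatFrom S (kseq (t + 1) - 1) (kseq (t + 1) - 1 - kseq t)

/-- Isomorphism of (bundled) permutation groups: a group isomorphism together with an
equivariant bijection of the underlying sets. -/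
def PermIso (P Q : PermGroup) : Prop :=
  ∃ (ψ : P.carrier ≃ Q.carrier) (φ : P.grp ≃* Q.grp),
    ∀ (σ : P.grp) (x : P.carrier),
      ψ ((σ : Perm P.carrier) x) = (φ σ : Perm Q.carrier) (ψ x)

section MixedIsoAux

theorem permCongr_mul' {α β : Type} (ψ : α ≃ β) (p q : Perm α) :
    ψ.permCongr (p * q) = ψ.permCongr p * ψ.permCongr q := by
  ext x; simp [Perm.mul_apply]

theorem permCongr_one' {α β : Type} (ψ : α ≃ β) :
    ψ.permCongr (1 : Perm α) = 1 := by
  ext x; simp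

theorem permCongr_inv' {α β : Type} (ψ : α ≃ β) (p : Perm α) :
    (ψ.permCongr p)⁻¹ = ψ.permCongr p⁻¹ := by
  symm
  apply eq_inv_of_mul_eq_one_left
  rw [← permCongr_mul']
  simp [permCongr_one']

theorem permCongr_cancel {α β : Type} (ψ : α ≃ β) (p : Perm β) :
    ψ.permCongr (ψ.symm.permCongr p) = p := by
  ext x; simp

theorem permCongr_cancel' {α β : Type} (ψ : α ≃ β) (p : Perm α) :
    ψ.symm.permCongr (ψ.permCongr p) = p := by
  ext x; simp

theorem permIso_of (P Q : PermGroup) (ψ : P.carrier ≃ Q.carrier)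
    (h : ∀ π : Perm P.carrier, π ∈ P.grp ↔ ψ.permCongr π ∈ Q.grp) : PermIso P Q := by
  refine ⟨ψ, ⟨⟨fun σ => ⟨ψ.permCongr σ, (h σ).1 σ.2⟩,
      fun τ => ⟨ψ.permCongr.symm τ, (h _).2 (by simp [permCongr_cancel])⟩, ?_, ?_⟩, ?_⟩, ?_⟩
  · intro σ; exact Subtype.ext (by simp [permCongr_cancel'])
  · intro τ; exact Subtype.ext (by simp [permCongr_cancel])
  · intro σ σ'; exact Subtype.ext (permCongr_mul' ψ σ σ')
  · intro σ x; simp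

theorem permIso_refl (P : PermGroup) : PermIso P P := by
  apply permIso_of P P (Equiv.refl _)
  intro π
  have : (Equiv.refl P.carrier).permCongr π = π := by ext x; simp
  rw [this]

theorem permIso_trans {P Q R : PermGroup} (h1 : PermIso P Q) (h2 : PermIso Q R) :
    PermIso P R := by
  obtain ⟨ψ1, φ1, hc1⟩ := h1
  obtain ⟨ψ2, φ2, hc2⟩ := h2
  exact ⟨ψ1.trans ψ2, φ1.trans φ2, fun σ x => by
    simp only [Equiv.trans_apply, MulEquiv.trans_apply, hc1, hc2]⟩

theorem permCongr_of_equivariant {P Q : PermGroup} (ψ : P.carrier ≃ Q.carrier)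
    (φ : P.grp ≃* Q.grp)
    (hc : ∀ (σ : P.grp) (x : P.carrier),
      ψ ((σ : Perm P.carrier) x) = (φ σ : Perm Q.carrier) (ψ x))
    (σ : P.grp) : ψ.permCongr (σ : Perm P.carrier) = (φ σ : Perm Q.carrier) := by
  ext y
  simp [Equiv.permCongr_apply, hc, Equiv.apply_symm_apply]

theorem permCongr_arrow_prodPerm {α β β' : Type} (ψ : β ≃ β') (a : β → Perm α) (b : Perm β) :
    (Equiv.arrowCongr ψ (Equiv.refl α)).permCongr (prodPerm a b)
      = prodPerm (fun i => a (ψ.symm i)) (ψ.permCongr b) := by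
  apply Equiv.ext; intro x; funext i
  rw [prodPerm_apply, permCongr_inv']
  simp [Equiv.permCongr_apply, Equiv.arrowCongr]

theorem permIso_expP_right {A B B' : PermGroup} (h : PermIso B B') :
    PermIso (ExpP A B) (ExpP A B') := by
  obtain ⟨ψ, φ, hc⟩ := h
  apply permIso_of _ _ (Equiv.arrowCongr ψ (Equiv.refl A.carrier))
  intro π
  show π ∈ expWr A.grp B.grp ↔
    (Equiv.arrowCongr ψ (Equiv.refl A.carrier)).permCongr π ∈ expWr A.grp B'.grp
  constructor
  · rintro ⟨a, b, ha, hb, rfl⟩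
    refine ⟨fun i => a (ψ.symm i), ((φ ⟨b, hb⟩ : B'.grp) : Perm B'.carrier),
      fun i => ha _, (φ ⟨b, hb⟩).2, ?_⟩
    rw [permCongr_arrow_prodPerm, permCongr_of_equivariant ψ φ hc ⟨b, hb⟩]
  · rintro ⟨a, b, ha, hb, hEq⟩
    have hφ : ψ.permCongr ((φ.symm ⟨b, hb⟩ : B.grp) : Perm B.carrier) = b := by
      rw [permCongr_of_equivariant ψ φ hc]
      simp
    have key : (Equiv.arrowCongr ψ (Equiv.refl A.carrier)).permCongr
        (prodPerm (fun i => a (ψ i)) ((φ.symm ⟨b, hb⟩ : B.grp) : Perm B.carrier))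
        = prodPerm a b := by
      rw [permCongr_arrow_prodPerm, hφ]
      congr 1
      funext i
      simp
    have hπ : π = prodPerm (fun i => a (ψ i))
        ((φ.symm ⟨b, hb⟩ : B.grp) : Perm B.carrier) :=
      ((Equiv.arrowCongr ψ (Equiv.refl A.carrier)).permCongr.injective
        (key.trans hEq.symm)).symm
    exact ⟨_, _, fun i => ha _, (φ.symm ⟨b, hb⟩).2, hπ⟩

/-- The currying bijection underlying `A ⟨≀⟩ (B ≀ C) ≅ (A ⟨≀⟩ B) ⟨≀⟩ C`. -/
def curryEquiv (α β γ : Type) : (β × γ → α) ≃ (γ → β → α) where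
  toFun x := fun j i => x (i, j)
  invFun y := fun p => y p.2 p.1
  left_inv x := rfl
  right_inv y := rfl

theorem wrPerm_inv_apply {α β : Type} (bv : β → Perm α) (b : Perm β) (i : α) (j : β) :
    (wrPerm bv b)⁻¹ (i, j) = ((bv j)⁻¹ i, b⁻¹ j) := by
  rw [wrPerm_inv]
  simp [wrPerm]

theorem curry_permCongr {α β γ : Type} (a : β × γ → Perm α) (bv : γ → Perm β) (c : Perm γ) :
    (curryEquiv α β γ).permCongr (prodPerm a (wrPerm bv c))
      = prodPerm (fun j => prodPerm (fun i => a (i, j)) (bv j)) c := by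
  apply Equiv.ext; intro x; funext j i
  show (prodPerm a (wrPerm bv c)) ((curryEquiv α β γ).symm x) (i, j)
    = prodPerm (fun j => prodPerm (fun i => a (i, j)) (bv j)) c x j i
  rw [prodPerm_apply, wrPerm_inv_apply]
  rfl

theorem permIso_curry (A B C : PermGroup) :
    PermIso (ExpP A (WrP B C)) (ExpP (ExpP A B) C) := by
  apply permIso_of _ _ (curryEquiv A.carrier B.carrier C.carrier)
  intro π
  show π ∈ expWr A.grp (permWr B.grp C.grp) ↔
    (curryEquiv A.carrier B.carrier C.carrier).permCongr π ∈ expWr (expWr A.grp B.grp) C.grp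
  constructor
  · rintro ⟨a, w, ha, hw, rfl⟩
    obtain ⟨bv, c, hbv, hc, rfl⟩ := hw
    exact ⟨fun j => prodPerm (fun i => a (i, j)) (bv j), c,
      fun j => ⟨fun i => a (i, j), bv j, fun i => ha _, hbv j, rfl⟩, hc,
      curry_permCongr a bv c⟩
  · rintro ⟨A', c, hA', hc, hEq⟩
    choose a bv ha hbv hdecomp using hA'
    have key : (curryEquiv A.carrier B.carrier C.carrier).permCongr
        (prodPerm (fun p => a p.2 p.1) (wrPerm bv c)) = prodPerm A' c := by
      rw [curry_permCongr]
      congr 1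
      funext j
      exact (hdecomp j).symm
    exact ⟨fun p => a p.2 p.1, wrPerm bv c, fun p => ha _ _,
      ⟨bv, c, hbv, hc, rfl⟩,
      ((curryEquiv A.carrier B.carrier C.carrier).permCongr.injective
        (key.trans hEq.symm)).symm⟩

theorem mixedPG_succ_true (S : ℕ → PermGroup) (e : ℕ → Bool) (k : ℕ) (h : e (k + 1) = true) :
    mixedPG S e (k + 1) = ExpP (S (k + 1)) (mixedPG S e k) := by
  simp [mixedPG, h]

theorem mixedPG_succ_false (S : ℕ → PermGroup) (e : ℕ → Bool) (k : ℕ) (h : e (k + 1) = false) :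
    mixedPG S e (k + 1) = WrP (S (k + 1)) (mixedPG S e k) := by
  simp [mixedPG, h]

theorem absorb (S : ℕ → PermGroup) (e : ℕ → Bool) (b : ℕ) (hb : e b = true) :
    ∀ c, c < b → (∀ j, b - c ≤ j → j < b → e j = false) →
    PermIso (mixedPG S e b) (ExpP (hatFrom S b c) (mixedPG S e (b - c - 1))) := by
  intro c
  induction c with
  | zero =>
    intro hc _
    obtain ⟨b', rfl⟩ : ∃ b', b = b' + 1 := ⟨b - 1, by omega⟩
    rw [mixedPG_succ_true S e b' hb]
    have h0 : b' + 1 - 0 - 1 = b' := by omega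
    rw [h0]
    exact permIso_refl _
  | succ c ih =>
    intro hc hfalse
    have h1 : PermIso (mixedPG S e b) (ExpP (hatFrom S b c) (mixedPG S e (b - c - 1))) :=
      ih (by omega) (fun j hj1 hj2 => hfalse j (by omega) hj2)
    have h2 : b - c - 1 = (b - c - 2) + 1 := by omega
    have h3 : e (b - c - 2 + 1) = false := by
      have := hfalse (b - c - 2 + 1) (by omega) (by omega)
      exact this
    rw [h2, mixedPG_succ_false S e _ h3] at h1
    have h4 : hatFrom S b (c + 1) = ExpP (hatFrom S b c) (S (b - c - 2 + 1)) := by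
      rw [show b - c - 2 + 1 = b - (c + 1) from by omega]
      rfl
    have h5 : b - (c + 1) - 1 = b - c - 2 := by omega
    rw [h5, h4]
    exact permIso_trans h1
      (permIso_curry (hatFrom S b c) (S (b - c - 2 + 1)) (mixedPG S e (b - c - 2)))

end MixedIsoAux

/-- **Lemma (mixed wreath products are iterated exponentiations).**
Here `e ℓ = true` records that the `ℓ`-th step of the iterated mixed wreath product
(indexed from `0`, so level `ℓ` is the paper's level `ℓ+1`) is an exponentiation step,
i.e. that `ℓ + 1` is one of the `k_n`; `kseq t` is the paper's `k_{t+1}`, and the paper's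
`G_{k_{n+1}}` and `H̃_{n+1}` are `mixedPG … (kseq n - 1)` and `iterExpP (hatSeq …) n`. -/
theorem mixed_iso (m : ℕ → ℕ) (S : ∀ k, Subgroup (Perm (Fin (m k))))
    (kseq : ℕ → ℕ) (hmono : StrictMono kseq) (hpos : 1 ≤ kseq 0)
    (e : ℕ → Bool) (he : ∀ ℓ : ℕ, e ℓ = true ↔ ∃ t, kseq t = ℓ + 1) :
    ∀ nn : ℕ,
      PermIso (mixedPG (fun k => ⟨Fin (m k), S k⟩) e (kseq nn - 1))
        (iterExpP (hatSeq (fun k => ⟨Fin (m k), S k⟩) kseq) nn) := by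
  set S' : ℕ → PermGroup := fun k => ⟨Fin (m k), S k⟩ with hS'
  have hge : ∀ t, 1 ≤ kseq t := fun t => le_trans hpos (hmono.monotone (Nat.zero_le t))
  have hetrue : ∀ t, e (kseq t - 1) = true := fun t =>
    (he (kseq t - 1)).2 ⟨t, by have := hge t; omega⟩
  intro nn
  induction nn with
  | zero =>
    show PermIso (mixedPG S' e (kseq 0 - 1)) (hatFrom S' (kseq 0 - 1) (kseq 0 - 1))
    rcases eq_or_lt_of_le hpos with h1 | h1
    · rw [show kseq 0 - 1 = 0 from by omega]
      exact permIso_refl _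
    · -- kseq 0 ≥ 2, so b := kseq 0 - 1 ≥ 1
      set b := kseq 0 - 1 with hbdef
      have hb1 : 1 ≤ b := by omega
      have hfalse : ∀ j, b - (b - 1) ≤ j → j < b → e j = false := by
        intro j hj1 hj2
        by_contra hcon
        obtain ⟨t, ht⟩ := (he j).1 (by simpa using hcon)
        have := hmono.monotone (Nat.zero_le t)
        omega
      have habs := absorb S' e b (hetrue 0) (b - 1) (by omega) hfalse
      rw [show b - (b - 1) - 1 = 0 from by omega] at habs
      have hhat : hatFrom S' b b = ExpP (hatFrom S' b (b - 1)) (mixedPG S' e 0) := by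
        rw [show b = (b - 1) + 1 from by omega]
        show ExpP (hatFrom S' ((b-1)+1) (b - 1)) (S' ((b-1)+1 - ((b-1)+1))) = _
        rw [Nat.sub_self]
        rfl
      rw [hhat]
      exact habs
  | succ nn ih =>
    show PermIso (mixedPG S' e (kseq (nn + 1) - 1))
      (ExpP (hatFrom S' (kseq (nn + 1) - 1) (kseq (nn + 1) - 1 - kseq nn))
        (iterExpP (hatSeq S' kseq) nn))
    set b := kseq (nn + 1) - 1 with hbdef
    set c := b - kseq nn with hcdef
    have hlt : kseq nn < kseq (nn + 1) := hmono (by omega)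
    have hknn : 1 ≤ kseq nn := hge nn
    have hcb : c < b := by omega
    have hfalse : ∀ j, b - c ≤ j → j < b → e j = false := by
      intro j hj1 hj2
      by_contra hcon
      obtain ⟨t, ht⟩ := (he j).1 (by simpa using hcon)
      have hbc : b - c = kseq nn := by omega
      have h1 : kseq nn < kseq t := by omega
      have h2 : kseq t < kseq (nn + 1) := by omega
      have := hmono.lt_iff_lt.mp h1
      have := hmono.lt_iff_lt.mp h2
      omega
    have habs := absorb S' e b (hetrue (nn + 1)) c hcb hfalse
    rw [show b - c - 1 = kseq nn - 1 from by omega] at habs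
    exact permIso_trans habs (permIso_expP_right ih)
end
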